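/- Let U be a finite nonempty set, 𝒮 a finite family of subsets of U with ⋃𝒮 = U, and k ∈ ℕ. Construct the network G with vertex set {t_u : u ∈ U} ∪ {s_A : A ∈ 𝒮} ∪ {r}, with a directed edge (t_u, s_A) for every u ∈ A ∈ 𝒮 and a directed edge (s_A, r) for every A ∈ 𝒮, all edge capacities equal to |U|+1 and all edge costs equal to 1, and the request with root r, terminals T = {t_u : u ∈ U}, Steiner sites S = {s_A : A ∈ 𝒮}, root capacity u_r = k, Steiner capacities u_S(s_A) = |U|, and arbitrary positive activation costs. Then this A-CVSAP instance admits a feasible Virtual Arborescence if and only if there exists a subfamily 𝒞 ⊆ 𝒮 with |𝒞| ≤ k and ⋃𝒞 = U. -/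

import Mathlib

/-! Formalization of the Constrained Virtual Steiner Arborescence Problem (CVSAP),
its single-commodity flow IP formulation, and related notions. -/

/-- Vertices of the extended graph: original vertices plus super source `src`,
super sink `sinkS` for Steiner nodes and super sink `sinkR` for the root. -/
inductive ExtV (V : Type) where
  | orig : V → ExtV V
  | src : ExtV V
  | sinkS : ExtV V
  | sinkR : ExtV V
deriving DecidableEq

open ExtV

/-- A (finite) capacitated directed network. -/
structure Network (V : Type) [DecidableEq V] where
  E : Finset (V × V)
  uE : V × V → ℕ
  cE : V × V → ℝ

/-- A request `R = (root, S, T, u_r, c_S, u_S)`. -/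
structure Request (V : Type) [DecidableEq V] where
  root : V
  S : Finset V
  T : Finset V
  ur : ℕ
  cS : V → ℝ
  uS : V → ℕ

variable {V : Type} [DecidableEq V]

/-- Well-formedness: root is neither terminal nor Steiner site, Steiner sites and terminals
are disjoint, and all costs are positive. -/
def RequestWF (N : Network V) (R : Request V) : Prop :=
  R.root ∉ R.T ∧ R.root ∉ R.S ∧ Disjoint R.S R.T ∧
    (∀ s ∈ R.S, 0 < R.cS s) ∧ (∀ e ∈ N.E, 0 < N.cE e)

/-- Edge set of the extended graph `G_ext`. -/
def Eext (N : Network V) (R : Request V) : Finset (ExtV V × ExtV V) :=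
  (N.E.image fun e => (orig e.1, orig e.2)) ∪
    ({(orig R.root, sinkR)} : Finset (ExtV V × ExtV V)) ∪
    (R.S.image fun s => (orig s, sinkS)) ∪
    (R.S.image fun s => (src, orig s)) ∪
    (R.T.image fun t => (src, orig t))

/-- `E_R`: the extended edges without the edges into the Steiner super sink. -/
def ERext (N : Network V) (R : Request V) : Finset (ExtV V × ExtV V) :=
  (Eext N R).filter fun e => e.2 ≠ sinkS

/-- Edges of `F` leaving node `v`. -/
def outV (F : Finset (ExtV V × ExtV V)) (v : ExtV V) : Finset (ExtV V × ExtV V) :=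
  F.filter fun e => e.1 = v

/-- Edges of `F` entering node `v`. -/
def inV (F : Finset (ExtV V × ExtV V)) (v : ExtV V) : Finset (ExtV V × ExtV V) :=
  F.filter fun e => e.2 = v

/-- Edges of `F` leaving the node set `W`. -/
def outSet (F : Finset (ExtV V × ExtV V)) (W : Finset (ExtV V)) : Finset (ExtV V × ExtV V) :=
  F.filter fun e => e.1 ∈ W ∧ e.2 ∉ W

/-- Total flow of `f` on the edge set `F`. -/
def fSum (f : ExtV V × ExtV V → ℕ) (F : Finset (ExtV V × ExtV V)) : ℕ :=
  ∑ e ∈ F, f e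

/-- Embedding of a set of original nodes into the extended graph. -/
def extW (W : Finset V) : Finset (ExtV V) := W.image orig

/-- A walk in the support graph `G^f_ext`: consecutive nodes are joined by extended
edges carrying positive flow. -/
def IsSupportWalk (N : Network V) (R : Request V) (f : ExtV V × ExtV V → ℕ)
    (p : List (ExtV V)) : Prop :=
  p.Chain' fun a b => (a, b) ∈ Eext N R ∧ 1 ≤ f (a, b)

/-- (IP-1): flow conservation at all original nodes. -/
def IP1 (N : Network V) (R : Request V) (f : ExtV V × ExtV V → ℕ) : Prop :=
  ∀ v : V, fSum f (outV (Eext N R) (orig v)) = fSum f (inV (Eext N R) (orig v))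

/-- (IP-2): connectivity inequalities for activated Steiner sites. -/
def IP2 (N : Network V) (R : Request V) (x : V → ℕ) (f : ExtV V × ExtV V → ℕ) : Prop :=
  ∀ W : Finset V, ∀ s ∈ W, s ∈ R.S → x s ≤ fSum f (outSet (ERext N R) (extW W))

/-- (IP-3): directed Steiner cuts for terminals. -/
def IP3 (N : Network V) (R : Request V) (f : ExtV V × ExtV V → ℕ) : Prop :=
  ∀ W : Finset V, (W ∩ R.T).Nonempty → 1 ≤ fSum f (outSet (ERext N R) (extW W))

/-- Feasibility for the integer program IP-A-CVSAP. -/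
def IPFeasible (N : Network V) (R : Request V) (x : V → ℕ) (f : ExtV V × ExtV V → ℕ) : Prop :=
  (∀ s ∈ R.S, x s ≤ 1) ∧
  IP1 N R f ∧
  IP2 N R x f ∧
  IP3 N R f ∧
  (∀ s ∈ R.S, x s ≤ f (orig s, sinkS)) ∧
  (∀ s ∈ R.S, f (orig s, sinkS) ≤ R.uS s * x s) ∧
  f (orig R.root, sinkR) ≤ R.ur ∧
  (∀ e ∈ N.E, f (orig e.1, orig e.2) ≤ N.uE e) ∧
  (∀ t ∈ R.T, f (src, orig t) = 1) ∧
  (∀ s ∈ R.S, f (src, orig s) = x s)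

/-- Objective value of IP-A-CVSAP. -/
noncomputable def costIP (N : Network V) (R : Request V) (x : V → ℕ)
    (f : ExtV V × ExtV V → ℕ) : ℝ :=
  ∑ e ∈ N.E, N.cE e * f (orig e.1, orig e.2) + ∑ s ∈ R.S, R.cS s * x s

/-- A Virtual Arborescence: nodes, virtual edges and the mapping of virtual edges
onto paths in the underlying graph. -/
structure VirtArb (V : Type) where
  VT : Finset V
  ET : Finset (V × V)
  pi : V × V → List V

/-- `p` is a simple directed path in `N` from `u` to `v`. -/
def IsPathInG (N : Network V) (p : List V) (u v : V) : Prop :=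
  p.Chain' (fun a b => (a, b) ∈ N.E) ∧ p.head? = some u ∧ p.getLast? = some v ∧ p.Nodup

/-- The virtual edges whose path uses the edge `e` of the underlying graph. -/
def pathUses (TA : VirtArb V) (e : V × V) : Finset (V × V) :=
  TA.ET.filter fun d => e ∈ (TA.pi d).zip (TA.pi d).tail

/-- `|π(E_T)[e]|`: the number of paths of the virtual arborescence using edge `e`. -/
def pathCount (TA : VirtArb V) (e : V × V) : ℕ := (pathUses TA e).card

/-- Total degree of node `v` with respect to the virtual edge set `ET`. -/
def degTotal (ET : Finset (V × V)) (v : V) : ℕ :=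
  (ET.filter fun e => e.1 = v).card + (ET.filter fun e => e.2 = v).card

/-- `(VT, ET, r)` is an arborescence rooted at `r` with all edges oriented towards `r`. -/
def ArborTowards (VT : Finset V) (ET : Finset (V × V)) (r : V) : Prop :=
  (∀ e ∈ ET, e.1 ∈ VT ∧ e.2 ∈ VT ∧ e.1 ≠ e.2) ∧
  (∀ v ∈ VT, v ≠ r → (ET.filter fun e => e.1 = v).card = 1) ∧
  (∀ e ∈ ET, e.1 ≠ r) ∧
  (∀ v ∈ VT, ∃ p : List V, p.Chain' (fun a b => (a, b) ∈ ET) ∧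
      p.head? = some v ∧ p.getLast? = some r)

/-- `(VT, ET, r)` is an arborescence rooted at `r` with all edges oriented away from `r`. -/
def ArborAway (VT : Finset V) (ET : Finset (V × V)) (r : V) : Prop :=
  (∀ e ∈ ET, e.1 ∈ VT ∧ e.2 ∈ VT ∧ e.1 ≠ e.2) ∧
  (∀ v ∈ VT, v ≠ r → (ET.filter fun e => e.2 = v).card = 1) ∧
  (∀ e ∈ ET, e.2 ≠ r) ∧
  (∀ v ∈ VT, ∃ p : List V, p.Chain' (fun a b => (a, b) ∈ ET) ∧
      p.head? = some r ∧ p.getLast? = some v)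

/-- Feasible solutions of A-CVSAP: all arborescence edges oriented towards the root. -/
def FeasibleACVSAP (N : Network V) (R : Request V) (TA : VirtArb V) : Prop :=
  R.root ∈ TA.VT ∧
  ArborTowards TA.VT TA.ET R.root ∧
  (∀ d ∈ TA.ET, IsPathInG N (TA.pi d) d.1 d.2) ∧
  R.T ⊆ TA.VT ∧
  TA.VT ⊆ insert R.root (R.S ∪ R.T) ∧
  (∀ t ∈ R.T, degTotal TA.ET t = 1) ∧
  degTotal TA.ET R.root ≤ R.ur ∧
  (∀ s ∈ R.S, s ∈ TA.VT → degTotal TA.ET s ≤ R.uS s + 1) ∧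
  (∀ e ∈ N.E, pathCount TA e ≤ N.uE e)

/-- Feasible solutions of M-CVSAP: all arborescence edges oriented away from the root. -/
def FeasibleMCVSAP (N : Network V) (R : Request V) (TA : VirtArb V) : Prop :=
  R.root ∈ TA.VT ∧
  ArborAway TA.VT TA.ET R.root ∧
  (∀ d ∈ TA.ET, IsPathInG N (TA.pi d) d.1 d.2) ∧
  R.T ⊆ TA.VT ∧
  TA.VT ⊆ insert R.root (R.S ∪ R.T) ∧
  (∀ t ∈ R.T, degTotal TA.ET t = 1) ∧
  degTotal TA.ET R.root ≤ R.ur ∧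
  (∀ s ∈ R.S, s ∈ TA.VT → degTotal TA.ET s ≤ R.uS s + 1) ∧
  (∀ e ∈ N.E, pathCount TA e ≤ N.uE e)

/-- Cost of a virtual arborescence. -/
noncomputable def costCVSAP (N : Network V) (R : Request V) (TA : VirtArb V) : ℝ :=
  ∑ e ∈ N.E, N.cE e * pathCount TA e + ∑ s ∈ R.S.filter (· ∈ TA.VT), R.cS s

/-! ### Statement 0: set cover reduction -/

/-- Vertex type of the set-cover instance: terminals `t_u`, Steiner sites `s_A`,
and the root `none`. -/
abbrev SCV (U : Type) [DecidableEq U] := Option (U ⊕ Finset U)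

/-- The network of the reduction: an edge `(t_u, s_A)` for every `u ∈ A ∈ 𝒮` and an
edge `(s_A, root)` for every `A ∈ 𝒮`; all capacities `|U| + 1`, all costs `1`. -/
def scNetwork (U : Type) [Fintype U] [DecidableEq U] (𝒮 : Finset (Finset U)) :
    Network (SCV U) where
  E := (𝒮.biUnion fun A => A.image fun u => ((some (Sum.inl u) : SCV U), some (Sum.inr A))) ∪
    (𝒮.image fun A => ((some (Sum.inr A) : SCV U), none))
  uE := fun _ => Fintype.card U + 1
  cE := fun _ => 1

/-- The request of the reduction: root `none`, terminals `{t_u : u ∈ U}`, Steiner sites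
`{s_A : A ∈ 𝒮}`, root capacity `k`, Steiner capacities `|U|`. -/
def scRequest (U : Type) [Fintype U] [DecidableEq U] (𝒮 : Finset (Finset U)) (k : ℕ)
    (cS : SCV U → ℝ) : Request (SCV U) where
  root := none
  S := 𝒮.image fun A => (some (Sum.inr A) : SCV U)
  T := Finset.univ.image fun u : U => (some (Sum.inl u) : SCV U)
  ur := k
  cS := cS
  uS := fun _ => Fintype.card U

/-! Every simple path of the network is `t_u → s_A`, `s_A → r` or `t_u → s_A → r` with
`u ∈ A ∈ 𝒮`. Hence in a feasible arborescence each terminal `t_u` reaches the root through a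
site `s_A` with `u ∈ A`, and the path of every virtual edge into the root ends in `s_A → r` for a
single site; the at most `k` virtual edges into the root thus carry a cover. Conversely, a cover
`𝒞` with a choice `u ∈ g u ∈ 𝒞` yields the depth-two arborescence `t_u → s_{g u} → r` realised
by single network edges: the root has degree at most `|𝒞|`, a site at most `|U| + 1`, and every
network edge is used at most once. -/

section Arborescence

variable {VT : Finset V} {ET : Finset (V × V)} {r v : V}

lemma ArborTowards.exists_out_edge (h : ArborTowards VT ET r) (hv : v ∈ VT) (hvr : v ≠ r) :
    ∃ w, (v, w) ∈ ET ∧ w ∈ VT ∧ v ≠ w := by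
  obtain ⟨⟨v', w⟩, hd⟩ := Finset.card_pos.mp (h.2.1 v hv hvr ▸ Nat.one_pos)
  obtain ⟨hdET, rfl⟩ := Finset.mem_filter.mp hd
  exact ⟨w, hdET, (h.1 _ hdET).2⟩

def parentEdges (W : Finset V) (r : V) (p : V → V) : Finset (V × V) :=
  (W.erase r).image fun v => (v, p v)

variable {W : Finset V} {p : V → V}

lemma mem_parentEdges {v w : V} : (v, w) ∈ parentEdges W r p ↔ v ∈ W.erase r ∧ w = p v := by
  simp [parentEdges, eq_comm, and_comm]

lemma parentEdges_filter_fst (v : V) :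
    (parentEdges W r p).filter (fun e => e.1 = v) =
      if v ∈ W.erase r then {(v, p v)} else ∅ := by
  ext ⟨a, b⟩
  split_ifs with hv <;> aesop (add simp mem_parentEdges)

lemma parentEdges_filter_snd (v : V) :
    (parentEdges W r p).filter (fun e => e.2 = v) =
      ((W.erase r).filter (p · = v)).image fun w => (w, p w) := by
  simp only [parentEdges, Finset.filter_image]

lemma degTotal_parentEdges (v : V) :
    degTotal (parentEdges W r p) v =
      (if v ∈ W.erase r then 1 else 0) + ((W.erase r).filter (p · = v)).card := by
  rw [degTotal, parentEdges_filter_fst, parentEdges_filter_snd,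
    Finset.card_image_of_injective _ fun _ _ h => (Prod.ext_iff.mp h).1]
  split_ifs <;> rfl

lemma arborTowards_parentEdges (hpW : ∀ v ∈ W, v ≠ r → p v ∈ W ∧ p v ≠ v)
    (hreach : ∀ v ∈ W, ∃ n, p^[n] v = r) : ArborTowards W (parentEdges W r p) r := by
  refine ⟨?_, ?_, ?_, ?_⟩
  · rintro ⟨v, w⟩ he
    obtain ⟨hv, rfl⟩ := mem_parentEdges.mp he
    obtain ⟨hvr, hvW⟩ := Finset.mem_erase.mp hv
    exact ⟨hvW, (hpW v hvW hvr).1, (hpW v hvW hvr).2.symm⟩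
  · intro v hv hvr
    simp [parentEdges_filter_fst, hv, hvr]
  · rintro ⟨v, w⟩ he
    exact (Finset.mem_erase.mp (mem_parentEdges.mp he).1).1
  · intro v hv
    obtain ⟨n, hn⟩ := hreach v hv
    induction n generalizing v with
    | zero => exact ⟨[v], .singleton v, rfl, by simpa using hn⟩
    | succ n ih =>
      by_cases hvr : v = r
      · exact ⟨[v], .singleton v, rfl, by simp [hvr]⟩
      obtain ⟨q, hq, hqhead, hqlast⟩ := ih (p v) (hpW v hv hvr).1 hn
      obtain ⟨q', rfl⟩ : ∃ q', q = p v :: q' := by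
        cases q <;> simp_all
      refine ⟨v :: p v :: q', List.IsChain.cons_cons ?_ hq, by simp, by simpa using hqlast⟩
      exact mem_parentEdges.mpr ⟨Finset.mem_erase.mpr ⟨hvr, hv⟩, rfl⟩

end Arborescence

section DirectPaths

variable {N : Network V}

lemma isPathInG_pair {u v : V} (huv : (u, v) ∈ N.E) (hne : u ≠ v) :
    IsPathInG N [u, v] u v :=
  ⟨.cons_cons huv (.singleton v), rfl, rfl, by simpa using hne⟩

lemma pathCount_pair_le_one (VT : Finset V) (ET : Finset (V × V)) (e : V × V) :
    pathCount ⟨VT, ET, fun d => [d.1, d.2]⟩ e ≤ 1 := by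
  refine Finset.card_le_one.mpr fun d hd d' hd' => ?_
  simp only [pathUses, Finset.mem_filter, List.tail_cons, List.zip_cons_cons,
    List.zip_nil_right, List.mem_singleton] at hd hd'
  exact hd.2.symm.trans hd'.2

end DirectPaths

section SetCover

variable {U : Type} [Fintype U] [DecidableEq U] {𝒮 𝒞 : Finset (Finset U)} {k : ℕ}
  {cS : SCV U → ℝ} {TA : VirtArb (SCV U)} {g : U → Finset U}

lemma scNetwork_edge_terminal {u : U} {y : SCV U} :
    (some (.inl u), y) ∈ (scNetwork U 𝒮).E ↔ ∃ A ∈ 𝒮, u ∈ A ∧ y = some (.inr A) := by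
  simp [scNetwork, eq_comm]

lemma scNetwork_edge_steiner {A : Finset U} {y : SCV U} :
    (some (.inr A), y) ∈ (scNetwork U 𝒮).E ↔ A ∈ 𝒮 ∧ y = none := by
  simp [scNetwork, eq_comm]

lemma scNetwork_edge_root {y : SCV U} : (none, y) ∉ (scNetwork U 𝒮).E := by
  simp [scNetwork]

lemma scNetwork_walk_steiner {A : Finset U} {l : List (SCV U)}
    (h : (some (.inr A) :: l).IsChain fun a b => (a, b) ∈ (scNetwork U 𝒮).E) :
    l = [] ∨ l = [none] := by
  match l, h with
  | [], _ => exact .inl rfl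
  | [_], .cons_cons he _ => exact .inr (by rw [(scNetwork_edge_steiner.mp he).2])
  | _ :: _ :: _, .cons_cons he (.cons_cons he' _) =>
    rw [(scNetwork_edge_steiner.mp he).2] at he'
    exact absurd he' scNetwork_edge_root

lemma scNetwork_walk_terminal {u : U} {l : List (SCV U)}
    (h : (some (.inl u) :: l).IsChain fun a b => (a, b) ∈ (scNetwork U 𝒮).E) :
    l = [] ∨ ∃ A ∈ 𝒮, u ∈ A ∧ (l = [some (.inr A)] ∨ l = [some (.inr A), none]) := by
  match l, h with
  | [], _ => exact .inl rfl
  | y :: l, .cons_cons he hl =>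
    obtain ⟨A, hA, huA, rfl⟩ := scNetwork_edge_terminal.mp he
    rcases scNetwork_walk_steiner hl with rfl | rfl
    exacts [.inr ⟨A, hA, huA, .inl rfl⟩, .inr ⟨A, hA, huA, .inr rfl⟩]

lemma scNetwork_path_steiner {A : Finset U} {p : List (SCV U)} {w : SCV U}
    (h : IsPathInG (scNetwork U 𝒮) p (some (.inr A)) w) (hne : some (.inr A) ≠ w) :
    w = none ∧ p = [some (.inr A), none] := by
  obtain ⟨hc, hhead, hlast, -⟩ := h
  obtain ⟨l, rfl⟩ := List.head?_eq_some_iff.mp hhead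
  rcases scNetwork_walk_steiner hc with rfl | rfl
  · exact absurd (by simpa using hlast) hne
  · exact ⟨by simpa [eq_comm] using hlast, rfl⟩

lemma scNetwork_path_terminal {u : U} {p : List (SCV U)} {w : SCV U}
    (h : IsPathInG (scNetwork U 𝒮) p (some (.inl u)) w) (hne : some (.inl u) ≠ w) :
    ∃ A ∈ 𝒮, u ∈ A ∧ (w = some (.inr A) ∨ w = none ∧ [some (.inr A), none] <:+ p) := by
  obtain ⟨hc, hhead, hlast, -⟩ := h
  obtain ⟨l, rfl⟩ := List.head?_eq_some_iff.mp hhead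
  rcases scNetwork_walk_terminal hc with rfl | ⟨A, hA, huA, rfl | rfl⟩
  · exact absurd (by simpa using hlast) hne
  · exact ⟨A, hA, huA, .inl (by simpa [eq_comm] using hlast)⟩
  · exact ⟨A, hA, huA, .inr ⟨by simpa [eq_comm] using hlast, List.suffix_cons _ _⟩⟩

lemma FeasibleACVSAP.exists_root_edge_through_cover
    (h : FeasibleACVSAP (scNetwork U 𝒮) (scRequest U 𝒮 k cS) TA) (u : U) :
    ∃ A ∈ 𝒮, u ∈ A ∧
      ∃ d ∈ TA.ET, d.2 = none ∧ [some (.inr A), none] <:+ TA.pi d := by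
  obtain ⟨-, harb, hpaths, hT, -⟩ := h
  obtain ⟨w, hw, hwVT, hne⟩ :=
    harb.exists_out_edge (v := some (.inl u)) (hT (by simp [scRequest])) (by simp [scRequest])
  obtain ⟨A, hA, huA, rfl | ⟨rfl, hsuffix⟩⟩ := scNetwork_path_terminal (hpaths _ hw) hne
  · obtain ⟨w', hw', -, hne'⟩ := harb.exists_out_edge hwVT (by simp [scRequest])
    obtain ⟨rfl, hpi⟩ := scNetwork_path_steiner (hpaths _ hw') hne'
    exact ⟨A, hA, huA, _, hw', rfl, hpi ▸ List.suffix_refl _⟩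
  · exact ⟨A, hA, huA, _, hw, rfl, hsuffix⟩

lemma setCover_of_feasibleACVSAP
    (h : FeasibleACVSAP (scNetwork U 𝒮) (scRequest U 𝒮 k cS) TA) :
    ∃ 𝒞 ⊆ 𝒮, 𝒞.card ≤ k ∧ ∀ u : U, ∃ A ∈ 𝒞, u ∈ A := by
  classical
  have hdegRoot : degTotal TA.ET none ≤ k := h.2.2.2.2.2.2.1
  let rootEdges := TA.ET.filter fun d => d.2 = none
  let sitesOn (d : SCV U × SCV U) := 𝒮.filter fun A => [some (.inr A), none] <:+ TA.pi d
  refine ⟨rootEdges.biUnion sitesOn, ?_, ?_, fun u => ?_⟩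
  · exact Finset.biUnion_subset.mpr fun d _ => Finset.filter_subset _ _
  · have hsites : ∀ d ∈ rootEdges, (sitesOn d).card ≤ 1 := fun d _ =>
      Finset.card_le_one.mpr fun A hA B hB => by
        simpa using (List.suffix_of_suffix_length_le (Finset.mem_filter.mp hA).2
          (Finset.mem_filter.mp hB).2 le_rfl).eq_of_length rfl
    calc (rootEdges.biUnion sitesOn).card ≤ rootEdges.card * 1 :=
          Finset.card_biUnion_le_card_mul _ _ _ hsites
      _ ≤ degTotal TA.ET none := by rw [mul_one, degTotal]; exact Nat.le_add_left _ _
      _ ≤ k := hdegRoot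
  · obtain ⟨A, hA, huA, d, hd, hd2, hsuffix⟩ := h.exists_root_edge_through_cover u
    exact ⟨A, Finset.mem_biUnion.mpr ⟨d, Finset.mem_filter.mpr ⟨hd, hd2⟩,
      Finset.mem_filter.mpr ⟨hA, hsuffix⟩⟩, huA⟩

def coverParent (g : U → Finset U) : SCV U → SCV U
  | some (.inl u) => some (.inr (g u))
  | _ => none

def coverNodes (𝒞 : Finset (Finset U)) : Finset (SCV U) :=
  insert none ((Finset.univ.image fun u => some (.inl u)) ∪ 𝒞.image fun A => some (.inr A))

def coverArborescence (𝒞 : Finset (Finset U)) (g : U → Finset U) : VirtArb (SCV U) :=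
  ⟨coverNodes 𝒞, parentEdges (coverNodes 𝒞) none (coverParent g), fun d => [d.1, d.2]⟩

lemma mem_coverNodes_erase {v : SCV U} :
    v ∈ (coverNodes 𝒞).erase none ↔ (∃ u, v = some (.inl u)) ∨ ∃ A ∈ 𝒞, v = some (.inr A) := by
  rcases v with _ | _ | _ <;> simp [coverNodes, eq_comm]

lemma coverParent_mem_scNetwork (h𝒞 : 𝒞 ⊆ 𝒮) (hg𝒞 : ∀ u, g u ∈ 𝒞) (hug : ∀ u, u ∈ g u)
    {v : SCV U} (hv : v ∈ (coverNodes 𝒞).erase none) :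
    (v, coverParent g v) ∈ (scNetwork U 𝒮).E ∧ coverParent g v ∈ coverNodes 𝒞 ∧
      coverParent g v ≠ v := by
  rcases mem_coverNodes_erase.mp hv with ⟨u, rfl⟩ | ⟨A, hA, rfl⟩
  · exact ⟨scNetwork_edge_terminal.mpr ⟨g u, h𝒞 (hg𝒞 u), hug u, rfl⟩,
      by simp [coverParent, coverNodes, hg𝒞 u], by simp [coverParent]⟩
  · exact ⟨scNetwork_edge_steiner.mpr ⟨h𝒞 hA, rfl⟩, by simp [coverParent, coverNodes],
      by simp [coverParent]⟩

lemma degTotal_coverArborescence_terminal (u : U) :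
    degTotal (coverArborescence 𝒞 g).ET (some (.inl u)) = 1 := by
  have hchildren : ((coverNodes 𝒞).erase none).filter (coverParent g · = some (.inl u)) = ∅ :=
    Finset.filter_false_of_mem fun v _ => by rcases v with _ | _ | _ <;> simp [coverParent]
  rw [coverArborescence, degTotal_parentEdges, hchildren,
    if_pos (mem_coverNodes_erase.mpr (.inl ⟨u, rfl⟩))]
  rfl

lemma degTotal_coverArborescence_root : degTotal (coverArborescence 𝒞 g).ET none ≤ 𝒞.card := by
  have hchildren : ((coverNodes 𝒞).erase none).filter (coverParent g · = none) ⊆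
      𝒞.image fun A => some (.inr A) := by
    intro v hv
    obtain ⟨hv, hvp⟩ := Finset.mem_filter.mp hv
    rcases mem_coverNodes_erase.mp hv with ⟨u, rfl⟩ | ⟨A, hA, rfl⟩
    · simp [coverParent] at hvp
    · exact Finset.mem_image_of_mem _ hA
  rw [coverArborescence, degTotal_parentEdges, if_neg (by simp), zero_add]
  exact (Finset.card_le_card hchildren).trans Finset.card_image_le

lemma degTotal_coverArborescence_steiner (A : Finset U) :
    degTotal (coverArborescence 𝒞 g).ET (some (.inr A)) ≤ Fintype.card U + 1 := by
  have hchildren : ((coverNodes 𝒞).erase none).filter (coverParent g · = some (.inr A)) ⊆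
      Finset.univ.image fun u => some (.inl u) := by
    intro v hv
    obtain ⟨hv, hvp⟩ := Finset.mem_filter.mp hv
    rcases mem_coverNodes_erase.mp hv with ⟨u, rfl⟩ | ⟨B, -, rfl⟩
    · exact Finset.mem_image_of_mem _ (Finset.mem_univ u)
    · simp [coverParent] at hvp
  rw [coverArborescence, degTotal_parentEdges, add_comm]
  gcongr
  · exact (Finset.card_le_card hchildren).trans Finset.card_image_le
  · split_ifs <;> simp

lemma feasibleACVSAP_coverArborescence (h𝒞 : 𝒞 ⊆ 𝒮) (hcard : 𝒞.card ≤ k)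
    (hg𝒞 : ∀ u, g u ∈ 𝒞) (hug : ∀ u, u ∈ g u) :
    FeasibleACVSAP (scNetwork U 𝒮) (scRequest U 𝒮 k cS) (coverArborescence 𝒞 g) := by
  have hparent := fun v (hv : v ∈ (coverNodes 𝒞).erase none) =>
    coverParent_mem_scNetwork h𝒞 hg𝒞 hug hv
  refine ⟨Finset.mem_insert_self _ _, ?_, ?_,
    fun v hv => Finset.mem_insert_of_mem (Finset.mem_union_left _ hv), ?_, ?_,
    degTotal_coverArborescence_root.trans hcard, fun s hs _ => ?_,
    fun e _ => (pathCount_pair_le_one _ _ e).trans (Nat.le_add_left _ _)⟩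
  · refine arborTowards_parentEdges (fun v hv hvr => ?_) fun v _ => ⟨2, ?_⟩
    · exact (hparent v (Finset.mem_erase.mpr ⟨hvr, hv⟩)).2
    · rcases v with _ | _ | _ <;> rfl
  · rintro ⟨v, w⟩ hd
    obtain ⟨hv, rfl⟩ := mem_parentEdges.mp hd
    exact isPathInG_pair (hparent v hv).1 (hparent v hv).2.2.symm
  · intro v hv
    by_cases hvr : v = none
    · simp [hvr, scRequest]
    rcases mem_coverNodes_erase.mp (Finset.mem_erase.mpr ⟨hvr, hv⟩) with ⟨u, rfl⟩ | ⟨A, hA, rfl⟩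
    · simp [scRequest]
    · simp [scRequest, h𝒞 hA]
  · intro t ht
    obtain ⟨u, -, rfl⟩ := Finset.mem_image.mp ht
    exact degTotal_coverArborescence_terminal u
  · obtain ⟨A, -, rfl⟩ := Finset.mem_image.mp hs
    exact degTotal_coverArborescence_steiner A

end SetCover

theorem setCover_reduction_general {U : Type} [Fintype U] [DecidableEq U]
    (𝒮 : Finset (Finset U)) (k : ℕ)
    (cS : SCV U → ℝ) :
    (∃ TA : VirtArb (SCV U), FeasibleACVSAP (scNetwork U 𝒮) (scRequest U 𝒮 k cS) TA) ↔
      (∃ 𝒞 ⊆ 𝒮, 𝒞.card ≤ k ∧ ∀ u : U, ∃ A ∈ 𝒞, u ∈ A) := by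
  constructor
  · rintro ⟨TA, hTA⟩
    exact setCover_of_feasibleACVSAP hTA
  · rintro ⟨𝒞, h𝒞, hcard, hcov⟩
    choose g hg𝒞 hug using hcov
    exact ⟨coverArborescence 𝒞 g, feasibleACVSAP_coverArborescence h𝒞 hcard hg𝒞 hug⟩

/-- The constructed A-CVSAP instance admits a feasible Virtual Arborescence iff there is a
set cover of size at most `k`. -/
theorem setCover_reduction {U : Type} [Fintype U] [DecidableEq U] [Nonempty U]
    (𝒮 : Finset (Finset U)) (hcover : ∀ u : U, ∃ A ∈ 𝒮, u ∈ A) (k : ℕ)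
    (cS : SCV U → ℝ) (hcS : ∀ v : SCV U, 0 < cS v) :
    (∃ TA : VirtArb (SCV U), FeasibleACVSAP (scNetwork U 𝒮) (scRequest U 𝒮 k cS) TA) ↔
      (∃ 𝒞 ⊆ 𝒮, 𝒞.card ≤ k ∧ ∀ u : U, ∃ A ∈ 𝒞, u ∈ A) :=
  setCover_reduction_general 𝒮 k cS
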